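/- arXiv:2209.00124 — 3 statements merged into one kernel-verified Lean document; each statement's English description precedes it below -/
import Mathlib

section
/- Let (S_n)_{n≥1} be a sequence of bounded linear test-statistics on a separable real Hilbert space H. Let (λ_i)_{i≥1} be positive constants, (φ_i)_{i≥1} an orthonormal basis of H, (Z_i)_{i≥1} i.i.d. standard normal random variables, and define S(·) = ∑_{i≥1} √λ_i Z_i ⟨φ_i, ·⟩; suppose the partial sums of S converge almost surely in the dual H* (with the operator norm). If S_n converges in distribution to S, then Conditions (G0), (G1) and (G2) hold, with σ(ω,ω') = ∑_{i≥1} λ_i ⟨φ_i,ω⟩⟨φ_i,ω'⟩. -/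
/-!
The limit `S` is an explicit Gaussian series, and everything is read off from it. Evaluating the
a.s. convergent series at `φₖ` gives `S(φₖ) = √λₖ Zₖ`, so by Parseval `‖S‖² = ∑ λₖ Zₖ²` is a.s.
finite. This forces `∑ λₖ < ∞`: by independence
`E exp(-∑_{k<m} λₖ Zₖ²) = ∏_{k<m} (1 + 2λₖ)^(-1/2) ≤ (1 + 2 ∑_{k<m} λₖ)^(-1/2)`,
while the left side stays above `E exp(-‖S‖²) > 0`.

Once `λ` is summable, `σ = ∑ λᵢ ⟪φᵢ,·⟫⟪φᵢ,·⟫` is a bounded form with `σ(φᵢ,φᵢ) = λᵢ`, which gives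
(G1). Each `S(v)` is the a.s. limit of the centred Gaussians `∑_{i<m} √λᵢ ⟪φᵢ,v⟫ Zᵢ`, hence (by
characteristic functions) has law `N(0, σ(v,v))`; (G0) follows by composing `S_n → S` with
evaluation at `ω₁ + ⋯ + ω_m`. For (G2), the tail `x ↦ ∑_{k>i} x(φₖ)²` is continuous on `H*`, so
by the portmanteau theorem `limsupₙ P(tail(S_n) ≥ ε) ≤ P'(tail(S) ≥ ε)`, which tends to `0` with
the tails of `‖S‖²`.
-/

open MeasureTheory ProbabilityTheory Filter Topology Real
open scoped ENNReal NNReal InnerProductSpace BoundedContinuousFunction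

section Gaussian

variable {Ω : Type*} [MeasurableSpace Ω] {P : Measure Ω}

lemma map_sum_mul_eq_gaussianReal {ι : Type*} [DecidableEq ι] {Z : ι → Ω → ℝ}
    (hZmeas : ∀ i, Measurable (Z i)) (hZindep : iIndepFun Z P)
    (hZgauss : ∀ i, P.map (Z i) = gaussianReal 0 1) (c : ι → ℝ) (s : Finset ι) :
    P.map (fun ω => ∑ i ∈ s, c i * Z i ω) = gaussianReal 0 (∑ i ∈ s, ‖c i‖₊ ^ 2) := by
  have := hZindep.isProbabilityMeasure
  induction s using Finset.induction_on with
  | empty => simp [gaussianReal_zero_var]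
  | insert a s has ih =>
    have hindep : IndepFun (fun ω => c a * Z a ω) (fun ω => ∑ i ∈ s, c i * Z i ω) P := by
      have := (hZindep.comp (fun i x => c i * x) fun i => measurable_const_mul (c i))
        |>.indepFun_finsetSum_of_notMem (fun i => (hZmeas i).const_mul (c i)) has
      simpa [Finset.sum_fn, Function.comp_def] using this.symm
    have ha : P.map (fun ω => c a * Z a ω) = gaussianReal 0 (‖c a‖₊ ^ 2) := by
      rw [← Function.comp_def (c a * ·), ← Measure.map_map (measurable_const_mul _) (hZmeas a),
        hZgauss, gaussianReal_map_const_mul]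
      congr 1
      · simp
      · ext; simp
    have h := gaussianReal_add_gaussianReal_of_indepFun hindep ha ih
    rw [zero_add] at h
    simp only [Finset.sum_insert has]
    exact h

lemma map_eq_gaussianReal_of_ae_tendsto [IsProbabilityMeasure P] {X : ℕ → Ω → ℝ} {Y : Ω → ℝ}
    (hX : ∀ m, AEMeasurable (X m) P) (hY : AEMeasurable Y P)
    (hlim : ∀ᵐ ω ∂P, Tendsto (fun m => X m ω) atTop (𝓝 (Y ω)))
    {v : ℕ → ℝ≥0} {w : ℝ≥0} (hv : Tendsto v atTop (𝓝 w))
    (hlaw : ∀ m, P.map (X m) = gaussianReal 0 (v m)) :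
    P.map Y = gaussianReal 0 w := by
  have := Measure.isProbabilityMeasure_map hY
  refine Measure.ext_of_charFun (funext fun t => ?_)
  have hexp : Continuous fun x : ℝ => Complex.exp (t * x * Complex.I) := by fun_prop
  have hcharX : Tendsto (fun m => charFun (P.map (X m)) t) atTop (𝓝 (charFun (P.map Y) t)) := by
    simp_rw [charFun_apply_real, integral_map (hX _) hexp.aestronglyMeasurable,
      integral_map hY hexp.aestronglyMeasurable]
    refine tendsto_integral_of_dominated_convergence (fun _ => 1)
      (fun m => hexp.comp_aestronglyMeasurable (hX m).aestronglyMeasurable)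
      (integrable_const _) (fun m => ae_of_all _ fun ω => ?_) ?_
    · rw [← Complex.ofReal_mul, Complex.norm_exp_ofReal_mul_I]
    · filter_upwards [hlim] with ω hω
      exact (hexp.tendsto _).comp hω
  have hcharG : Tendsto (fun m => charFun (gaussianReal 0 (v m)) t) atTop
      (𝓝 (charFun (gaussianReal 0 w) t)) := by
    simp_rw [charFun_gaussianReal]
    exact ((by fun_prop : Continuous fun r : ℝ≥0 =>
      Complex.exp (t * (0 : ℝ) * Complex.I - r * t ^ 2 / 2)).tendsto w).comp hv
  simp_rw [hlaw] at hcharX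
  exact tendsto_nhds_unique hcharX hcharG

lemma integral_exp_neg_mul_sq_gaussianReal {a : ℝ} (ha : -(1 / 2) < a) :
    ∫ x, rexp (-a * x ^ 2) ∂gaussianReal 0 1 = (√(1 + 2 * a))⁻¹ := by
  have hsplit : ∀ x : ℝ, gaussianPDFReal 0 1 x • rexp (-a * x ^ 2)
      = (√(2 * π))⁻¹ * rexp (-(a + 1 / 2) * x ^ 2) := by
    intro x
    rw [gaussianPDFReal, smul_eq_mul, mul_assoc, ← Real.exp_add]
    congr 2
    · simp
    · push_cast; ring
  have ha' : 0 < a + 1 / 2 := by linarith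
  rw [integral_gaussianReal_eq_integral_smul one_ne_zero]
  simp_rw [hsplit]
  rw [integral_const_mul, integral_gaussian, ← Real.sqrt_inv, ← Real.sqrt_inv,
    ← Real.sqrt_mul (by positivity)]
  congr 1
  field_simp
  ring

lemma Finset.one_add_sum_le_prod_one_add {ι : Type*} (s : Finset ι) {f : ι → ℝ}
    (hf : ∀ i ∈ s, 0 ≤ f i) : 1 + ∑ i ∈ s, f i ≤ ∏ i ∈ s, (1 + f i) := by
  classical
  induction s using Finset.induction_on with
  | empty => simp
  | insert a s has ih =>
    rw [Finset.sum_insert has, Finset.prod_insert has]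
    have ha := hf a (Finset.mem_insert_self a s)
    have hs := Finset.sum_nonneg fun i hi => hf i (Finset.mem_insert_of_mem hi)
    nlinarith [ih fun i hi => hf i (Finset.mem_insert_of_mem hi)]

lemma mgf_mul_sq_of_map_eq_gaussianReal {Z : Ω → ℝ} (hZmeas : Measurable Z)
    (hZgauss : P.map Z = gaussianReal 0 1) {a : ℝ} (ha : -(1 / 2) < a) :
    mgf (fun ω => a * Z ω ^ 2) P (-1) = (√(1 + 2 * a))⁻¹ := by
  have hcont : Continuous fun x : ℝ => rexp (-a * x ^ 2) := by fun_prop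
  rw [← integral_exp_neg_mul_sq_gaussianReal ha, ← hZgauss,
    integral_map hZmeas.aemeasurable hcont.aestronglyMeasurable, mgf]
  simp_rw [neg_one_mul, neg_mul]

lemma integrable_exp_neg_one_mul [IsFiniteMeasure P] {Y : Ω → ℝ} (hY : AEStronglyMeasurable Y P)
    (hY_nonneg : ∀ ω, 0 ≤ Y ω) : Integrable (fun ω => rexp (-1 * Y ω)) P :=
  Integrable.of_bound (continuous_exp.comp_aestronglyMeasurable (hY.const_mul _)) 1
    (ae_of_all _ fun ω => by
      rw [Real.norm_of_nonneg (exp_nonneg _), exp_le_one_iff, neg_one_mul, neg_nonpos]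
      exact hY_nonneg ω)

lemma sum_le_of_le_prod_inv_sqrt {ι : Type*} {s : Finset ι} {a : ι → ℝ} (ha : ∀ i ∈ s, 0 ≤ a i)
    {δ : ℝ} (hδ : 0 < δ) (h : δ ≤ ∏ i ∈ s, (√(1 + 2 * a i))⁻¹) :
    ∑ i ∈ s, a i ≤ (δ⁻¹ ^ 2 - 1) / 2 := by
  have hsq : δ ^ 2 ≤ (∏ i ∈ s, (1 + 2 * a i))⁻¹ :=
    calc δ ^ 2 ≤ (∏ i ∈ s, (√(1 + 2 * a i))⁻¹) ^ 2 := by gcongr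
      _ = (∏ i ∈ s, (1 + 2 * a i))⁻¹ := by
        rw [← Finset.prod_pow, ← Finset.prod_inv_distrib]
        refine Finset.prod_congr rfl fun i hi => ?_
        rw [inv_pow, sq_sqrt (by linarith [ha i hi])]
  have hprod : ∏ i ∈ s, (1 + 2 * a i) ≤ δ⁻¹ ^ 2 := by
    rw [inv_pow]
    exact le_inv_of_le_inv₀ (by positivity) hsq
  have hsum := s.one_add_sum_le_prod_one_add (f := fun i => 2 * a i)
    fun i hi => mul_nonneg zero_le_two (ha i hi)
  rw [← Finset.mul_sum] at hsum
  linarith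

lemma summable_of_ae_summable_mul_sq {Z : ℕ → Ω → ℝ} (hZmeas : ∀ i, Measurable (Z i))
    (hZindep : iIndepFun Z P) (hZgauss : ∀ i, P.map (Z i) = gaussianReal 0 1)
    {lam : ℕ → ℝ} (hlam : ∀ i, 0 ≤ lam i)
    (hsum : ∀ᵐ ω ∂P, Summable fun i => lam i * Z i ω ^ 2) : Summable lam := by
  have := hZindep.isProbabilityMeasure
  set X : ℕ → Ω → ℝ := fun i ω => lam i * Z i ω ^ 2
  have hX_nonneg : ∀ i ω, 0 ≤ X i ω := fun i ω => mul_nonneg (hlam i) (sq_nonneg _)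
  have hXmeas : ∀ i, Measurable (X i) := fun i => ((hZmeas i).pow_const 2).const_mul _
  have hXindep : iIndepFun X P :=
    hZindep.comp (fun i x => lam i * x ^ 2) fun i => (measurable_id.pow_const 2).const_mul _
  have hpartial_meas : ∀ m, AEStronglyMeasurable (∑ i ∈ Finset.range m, X i) P :=
    fun m => (Finset.aemeasurable_sum _ fun i _ => (hXmeas i).aemeasurable).aestronglyMeasurable
  have hpartial_nonneg : ∀ m ω, 0 ≤ (∑ i ∈ Finset.range m, X i) ω := fun m ω => by
    rw [Finset.sum_apply]; exact Finset.sum_nonneg fun i _ => hX_nonneg i ω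
  set W : Ω → ℝ := fun ω => ∑' i, X i ω
  have hW_meas : AEStronglyMeasurable W P :=
    aestronglyMeasurable_of_tendsto_ae atTop hpartial_meas
      (hsum.mono fun ω h => by simpa only [Finset.sum_apply] using h.hasSum.tendsto_sum_nat)
  have hW_int := integrable_exp_neg_one_mul hW_meas fun ω => tsum_nonneg fun i => hX_nonneg i ω
  set δ := mgf W P (-1)
  have hδ_pos : 0 < δ := mgf_pos hW_int
  have hδ_le : ∀ m, δ ≤ ∏ i ∈ Finset.range m, (√(1 + 2 * lam i))⁻¹ := by
    intro m
    rw [← Finset.prod_congr rfl fun i _ =>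
      mgf_mul_sq_of_map_eq_gaussianReal (hZmeas i) (hZgauss i) (by linarith [hlam i]),
      ← hXindep.mgf_sum hXmeas]
    refine integral_mono_ae hW_int
      (integrable_exp_neg_one_mul (hpartial_meas m) (hpartial_nonneg m)) ?_
    filter_upwards [hsum] with ω hω
    rw [Finset.sum_apply, neg_one_mul, neg_one_mul, exp_le_exp, neg_le_neg_iff]
    exact hω.sum_le_tsum _ fun i _ => hX_nonneg i ω
  exact summable_of_sum_range_le hlam fun m =>
    sum_le_of_le_prod_inv_sqrt (fun i _ => hlam i) hδ_pos (hδ_le m)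

end Gaussian

section Hilbert

variable {H : Type*} [NormedAddCommGroup H] [InnerProductSpace ℝ H]

lemma Orthonormal.apply_eq_of_tendsto_sum_smul_innerSL {v : ℕ → H} (hv : Orthonormal ℝ v)
    {a : ℕ → ℝ} {x : H →L[ℝ] ℝ}
    (h : Tendsto (fun m => ∑ i ∈ Finset.range m, a i • innerSL ℝ (v i)) atTop (𝓝 x)) (k : ℕ) :
    x (v k) = a k := by
  refine tendsto_nhds_unique (((continuous_eval_const (v k)).tendsto x).comp h) ?_
  refine tendsto_const_nhds.congr' ((eventually_gt_atTop k).mono fun m hm => ?_)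
  simp [orthonormal_iff_ite.mp hv, Finset.sum_ite_eq', hm]

namespace HilbertBasis

variable {ι : Type*}

lemma hasSum_sq_apply [CompleteSpace H] (b : HilbertBasis ι ℝ H) (x : H →L[ℝ] ℝ) :
    HasSum (fun i => x (b i) ^ 2) (‖x‖ ^ 2) := by
  set y := (InnerProductSpace.toDual ℝ H).symm x
  have hy : ∀ w, x w = ⟪y, w⟫_ℝ := fun w => by simp [y]
  have hxy : ‖y‖ = ‖x‖ := by simp [y]
  have h := b.hasSum_inner_mul_inner y y
  rw [real_inner_self_eq_norm_sq, hxy] at h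
  exact h.congr_fun fun i => by rw [hy, sq, real_inner_comm]

lemma tsum_sq_apply_add [CompleteSpace H] (b : HilbertBasis ℕ ℝ H) (x : H →L[ℝ] ℝ) (n : ℕ) :
    ∑' k, x (b (k + n)) ^ 2 = ‖x‖ ^ 2 - ∑ j ∈ Finset.range n, x (b j) ^ 2 := by
  rw [← (b.hasSum_sq_apply x).tsum_eq, ← (b.hasSum_sq_apply x).summable.sum_add_tsum_nat_add n]
  ring

lemma continuous_tsum_sq_apply_add [CompleteSpace H] (b : HilbertBasis ℕ ℝ H) (n : ℕ) :
    Continuous fun x : H →L[ℝ] ℝ => ∑' k, x (b (k + n)) ^ 2 := by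
  simp_rw [b.tsum_sq_apply_add]
  fun_prop

/-- The series converges in operator norm when `lam` is summable; otherwise this is the junk
value `0`. -/
noncomputable def diagonalForm (b : HilbertBasis ι ℝ H) (lam : ι → ℝ) : H →L[ℝ] H →L[ℝ] ℝ :=
  ∑' i, lam i • (innerSL ℝ (b i : H)).smulRight (innerSL ℝ (b i : H))

variable {b : HilbertBasis ι ℝ H} {lam : ι → ℝ}

lemma hasSum_diagonalForm_apply (hlam : Summable lam) (v w : H) :
    HasSum (fun i => lam i * ⟪(b i : H), v⟫_ℝ * ⟪(b i : H), w⟫_ℝ) (b.diagonalForm lam v w) := by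
  have hs : Summable fun i => lam i • (innerSL ℝ (b i : H)).smulRight (innerSL ℝ (b i : H)) := by
    refine Summable.of_norm_bounded (E := H →L[ℝ] H →L[ℝ] ℝ) hlam.abs fun i =>
      (ContinuousLinearMap.opNorm_smul_le _ _).trans ?_
    rw [ContinuousLinearMap.norm_smulRight_apply, innerSL_apply_norm, b.orthonormal.1 i]
    simp
  have := (hs.hasSum.mapL (ContinuousLinearMap.apply ℝ (H →L[ℝ] ℝ) v)).mapL
    (ContinuousLinearMap.apply ℝ ℝ w)
  refine this.congr_fun fun i => ?_
  simp only [ContinuousLinearMap.apply_apply, FunLike.coe_smul, Pi.smul_apply,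
    ContinuousLinearMap.smulRight_apply, innerSL_apply_apply, smul_eq_mul]
  ring

lemma diagonalForm_apply (hlam : Summable lam) (v w : H) :
    b.diagonalForm lam v w = ∑' i, lam i * ⟪(b i : H), v⟫_ℝ * ⟪(b i : H), w⟫_ℝ :=
  (hasSum_diagonalForm_apply hlam v w).tsum_eq.symm

lemma diagonalForm_comm (hlam : Summable lam) (v w : H) :
    b.diagonalForm lam v w = b.diagonalForm lam w v := by
  simp_rw [diagonalForm_apply hlam, mul_right_comm]

lemma diagonalForm_self_nonneg (hlam : Summable lam) (hlam_nonneg : ∀ i, 0 ≤ lam i) (v : H) :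
    0 ≤ b.diagonalForm lam v v := by
  rw [diagonalForm_apply hlam]
  exact tsum_nonneg fun i => by rw [mul_assoc]; exact mul_nonneg (hlam_nonneg i) (mul_self_nonneg _)

lemma diagonalForm_apply_self [DecidableEq ι] (hlam : Summable lam) (i : ι) :
    b.diagonalForm lam (b i) (b i) = lam i := by
  rw [diagonalForm_apply hlam,
    tsum_eq_single i fun j hj => by simp [orthonormal_iff_ite.mp b.orthonormal, hj]]
  simp [b.orthonormal.1 i]

end HilbertBasis

end Hilbert

lemma limsup_measure_preimage_le_of_tendsto_integral {Ω Ω' E : Type*} [MeasurableSpace Ω]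
    [MeasurableSpace Ω'] [TopologicalSpace E] [MeasurableSpace E] [OpensMeasurableSpace E]
    [HasOuterApproxClosed E] {P : Measure Ω} [IsProbabilityMeasure P] {P' : Measure Ω'}
    [IsProbabilityMeasure P'] {X : ℕ → Ω → E} {Y : Ω' → E} (hX : ∀ n, AEMeasurable (X n) P)
    (hY : AEMeasurable Y P')
    (hconv : ∀ f : E →ᵇ ℝ, Tendsto (fun n => ∫ a, f (X n a) ∂P) atTop (𝓝 (∫ b, f (Y b) ∂P')))
    {F : Set E} (hF : IsClosed F) :
    limsup (fun n => P (X n ⁻¹' F)) atTop ≤ P' (Y ⁻¹' F) := by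
  let μs : ℕ → ProbabilityMeasure E := fun n =>
    ⟨P.map (X n), Measure.isProbabilityMeasure_map (hX n)⟩
  let μ : ProbabilityMeasure E := ⟨P'.map Y, Measure.isProbabilityMeasure_map hY⟩
  have hμ : Tendsto μs atTop (𝓝 μ) :=
    ProbabilityMeasure.tendsto_iff_forall_integral_tendsto.mpr fun f => by
      simpa [μs, μ, integral_map (hX _) f.continuous.aestronglyMeasurable,
        integral_map hY f.continuous.aestronglyMeasurable] using hconv f
  simpa [μs, μ, Measure.map_apply_of_aemeasurable (hX _) hF.measurableSet,
    Measure.map_apply_of_aemeasurable hY hF.measurableSet] using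
    ProbabilityMeasure.limsup_measure_closed_le_of_tendsto hμ hF

section RandomSeries

variable {Ω : Type*} [MeasurableSpace Ω] {P : Measure Ω}
  {H : Type*} [NormedAddCommGroup H] [InnerProductSpace ℝ H]
  {Z : ℕ → Ω → ℝ} {lam : ℕ → ℝ} {φ : HilbertBasis ℕ ℝ H} {L : Ω → H →L[ℝ] ℝ}

lemma summable_of_ae_tendsto_sum_smul_innerSL [CompleteSpace H] (hZmeas : ∀ i, Measurable (Z i))
    (hZindep : iIndepFun Z P) (hZgauss : ∀ i, P.map (Z i) = gaussianReal 0 1)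
    (hlam : ∀ i, 0 ≤ lam i)
    (hL : ∀ᵐ ω ∂P, Tendsto (fun m => ∑ i ∈ Finset.range m,
      (√(lam i) * Z i ω) • innerSL ℝ (φ i : H)) atTop (𝓝 (L ω))) :
    Summable lam := by
  refine summable_of_ae_summable_mul_sq hZmeas hZindep hZgauss hlam ?_
  filter_upwards [hL] with ω hω
  refine (φ.hasSum_sq_apply (L ω)).summable.congr fun k => ?_
  rw [φ.orthonormal.apply_eq_of_tendsto_sum_smul_innerSL hω k, mul_pow, sq_sqrt (hlam k)]

lemma map_apply_eq_gaussianReal_of_ae_tendsto [MeasurableSpace (H →L[ℝ] ℝ)]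
    [BorelSpace (H →L[ℝ] ℝ)] (hZmeas : ∀ i, Measurable (Z i))
    (hZindep : iIndepFun Z P) (hZgauss : ∀ i, P.map (Z i) = gaussianReal 0 1)
    (hlam : ∀ i, 0 ≤ lam i) (hlam_sum : Summable lam) (hLmeas : AEMeasurable L P)
    (hL : ∀ᵐ ω ∂P, Tendsto (fun m => ∑ i ∈ Finset.range m,
      (√(lam i) * Z i ω) • innerSL ℝ (φ i : H)) atTop (𝓝 (L ω))) (v : H) :
    P.map (fun ω => L ω v) = gaussianReal 0 (φ.diagonalForm lam v v).toNNReal := by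
  have := hZindep.isProbabilityMeasure
  set c : ℕ → ℝ := fun i => √(lam i) * ⟪(φ i : H), v⟫_ℝ
  refine map_eq_gaussianReal_of_ae_tendsto (X := fun m ω => ∑ i ∈ Finset.range m, c i * Z i ω)
    (fun m => by fun_prop) ((continuous_eval_const v).measurable.comp_aemeasurable hLmeas) ?_ ?_
    fun m => map_sum_mul_eq_gaussianReal hZmeas hZindep hZgauss c _
  · filter_upwards [hL] with ω hω
    refine (((continuous_eval_const v).tendsto _).comp hω).congr fun m => ?_
    simp only [Function.comp_apply, sum_apply, smul_apply, coe_innerSL_apply, smul_eq_mul, c]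
    exact Finset.sum_congr rfl fun i _ => by ring
  · rw [← NNReal.tendsto_coe, Real.coe_toNNReal _ (φ.diagonalForm_self_nonneg hlam_sum hlam v)]
    refine (φ.hasSum_diagonalForm_apply hlam_sum v v).tendsto_sum_nat.congr fun m => ?_
    push_cast
    exact Finset.sum_congr rfl fun i _ => by
      rw [Real.norm_eq_abs, sq_abs, mul_pow, sq_sqrt (hlam i)]; ring

lemma HilbertBasis.tendsto_measure_le_tsum_sq_apply_add [CompleteSpace H]
    [MeasurableSpace (H →L[ℝ] ℝ)] [BorelSpace (H →L[ℝ] ℝ)] (φ : HilbertBasis ℕ ℝ H)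
    (P : Measure Ω) [IsFiniteMeasure P] (hL : Measurable L) {ε : ℝ} (hε : 0 < ε) :
    Tendsto (fun n => P (L ⁻¹' {x | ε ≤ ∑' k, x (φ (k + n)) ^ 2})) atTop (𝓝 0) := by
  rw [← measure_empty (μ := P)]
  refine tendsto_measure_of_ae_tendsto_indicator_of_isFiniteMeasure atTop MeasurableSet.empty
    (fun n => hL (isClosed_le continuous_const (φ.continuous_tsum_sq_apply_add n)).measurableSet)
    (ae_of_all P fun ω => ?_)
  filter_upwards [(tendsto_sum_nat_add fun k => L ω (φ k) ^ 2).eventually_lt_const hε] with n hn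
  simp [hn]

end RandomSeries

lemma HilbertBasis.tendsto_limsup_measure_le_tsum_sq_apply {Ω Ω' H : Type*} [MeasurableSpace Ω]
    [MeasurableSpace Ω'] [NormedAddCommGroup H] [InnerProductSpace ℝ H] [CompleteSpace H]
    [MeasurableSpace (H →L[ℝ] ℝ)] [BorelSpace (H →L[ℝ] ℝ)] (φ : HilbertBasis ℕ ℝ H)
    {P : Measure Ω} [IsProbabilityMeasure P] {P' : Measure Ω'} [IsProbabilityMeasure P']
    {X : ℕ → Ω → H →L[ℝ] ℝ} {Y : Ω' → H →L[ℝ] ℝ} (hX : ∀ n, Measurable (X n))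
    (hY : Measurable Y)
    (hconv : ∀ f : (H →L[ℝ] ℝ) →ᵇ ℝ,
      Tendsto (fun n => ∫ a, f (X n a) ∂P) atTop (𝓝 (∫ b, f (Y b) ∂P')))
    {ε : ℝ} (hε : 0 < ε) :
    Tendsto (fun i => limsup (fun n => P {a | ε ≤ ∑' k, X n a (φ (i + 1 + k)) ^ 2}) atTop)
      atTop (𝓝 0) := by
  refine tendsto_of_tendsto_of_tendsto_of_le_of_le tendsto_const_nhds
    ((φ.tendsto_measure_le_tsum_sq_apply_add P' hY hε).comp (tendsto_add_atTop_nat 1))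
    (fun i => zero_le) fun i => ?_
  have hF : IsClosed {x : H →L[ℝ] ℝ | ε ≤ ∑' k, x (φ (k + (i + 1))) ^ 2} :=
    isClosed_le continuous_const (φ.continuous_tsum_sq_apply_add _)
  simp_rw [add_comm (i + 1)]
  have hlimsup := limsup_measure_preimage_le_of_tendsto_integral
    (fun n => (hX n).aemeasurable) hY.aemeasurable hconv hF
  exact hlimsup

theorem conditions_necessary_of_tendsto_in_distribution_general
    {Ω : Type*} [MeasurableSpace Ω] (P : Measure Ω) [IsProbabilityMeasure P]
    {H : Type*} [NormedAddCommGroup H] [InnerProductSpace ℝ H]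
    [CompleteSpace H]
    [MeasurableSpace (H →L[ℝ] ℝ)] [BorelSpace (H →L[ℝ] ℝ)]
    (S : ℕ → Ω → (H →L[ℝ] ℝ)) (hSmeas : ∀ n, Measurable (S n))
    (lam : ℕ → ℝ) (hlam : ∀ i, 0 < lam i)
    (φ : HilbertBasis ℕ ℝ H)
    {Ω' : Type*} [MeasurableSpace Ω'] (P' : Measure Ω') [IsProbabilityMeasure P']
    (Z : ℕ → Ω' → ℝ) (hZmeas : ∀ i, Measurable (Z i))
    (hZindep : iIndepFun Z P')
    (hZgauss : ∀ i, Measure.map (Z i) P' = gaussianReal 0 1)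
    (Slim : Ω' → (H →L[ℝ] ℝ)) (hSlimMeas : Measurable Slim)
    -- the series defining `S` converges almost surely in `H⋆`:
    (hSlim : ∀ᵐ b' ∂P',
      Tendsto
        (fun m => ∑ i ∈ Finset.range m,
          (Real.sqrt (lam i) * Z i b') • (innerSL ℝ (φ i : H)))
        atTop (𝓝 (Slim b')))
    -- `S_n → S` in distribution:
    (hconv : ∀ f : BoundedContinuousFunction (H →L[ℝ] ℝ) ℝ,
      Tendsto (fun n => ∫ a, f (S n a) ∂P) atTop (𝓝 (∫ b', f (Slim b') ∂P'))) :
    -- Condition (G0), with `σ(ω,ω') = ∑_i λ_i ⟪φ_i,ω⟫⟪φ_i,ω'⟫`: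
    (∃ σ : H →L[ℝ] H →L[ℝ] ℝ,
      (∀ v w : H, σ v w = ∑' i, lam i * ⟪(φ i : H), v⟫_ℝ * ⟪(φ i : H), w⟫_ℝ) ∧
      (∀ v w : H, σ v w = σ w v) ∧
      (∀ (m : ℕ) (ω : Fin m → H),
        0 ≤ ∑ i, ∑ j, σ (ω i) (ω j) ∧
        ∀ f : BoundedContinuousFunction ℝ ℝ,
          Tendsto (fun n => ∫ a, f (S n a (∑ i, ω i)) ∂P) atTop
            (𝓝 (∫ t, f t ∂gaussianReal 0 (∑ i, ∑ j, σ (ω i) (ω j)).toNNReal)))) ∧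
    -- Condition (G1):
    (∃ b : HilbertBasis ℕ ℝ H,
      Summable fun i =>
        ∑' j, lam j * ⟪(φ j : H), (b i : H)⟫_ℝ * ⟪(φ j : H), (b i : H)⟫_ℝ) ∧
    -- Condition (G2):
    (∃ b : HilbertBasis ℕ ℝ H, ∀ ε > (0 : ℝ),
      Tendsto
        (fun i => Filter.limsup
          (fun n => P {a | ε ≤ ∑' k : ℕ, (S n a (b (i + 1 + k))) ^ 2}) atTop)
        atTop (𝓝 (0 : ℝ≥0∞))) := by
  have hlam_nonneg : ∀ i, 0 ≤ lam i := fun i => (hlam i).le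
  have hlam_sum : Summable lam :=
    summable_of_ae_tendsto_sum_smul_innerSL hZmeas hZindep hZgauss hlam_nonneg hSlim
  set σ := φ.diagonalForm lam
  have hlaw : ∀ v, P'.map (fun ω => Slim ω v) = gaussianReal 0 (σ v v).toNNReal :=
    map_apply_eq_gaussianReal_of_ae_tendsto hZmeas hZindep hZgauss hlam_nonneg hlam_sum
      hSlimMeas.aemeasurable hSlim
  refine ⟨⟨σ, φ.diagonalForm_apply hlam_sum, φ.diagonalForm_comm hlam_sum, fun m ω => ?_⟩,
    ⟨φ, ?_⟩, ⟨φ, fun ε hε => φ.tendsto_limsup_measure_le_tsum_sq_apply hSmeas hSlimMeas hconv hε⟩⟩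
  · have hσ_sum : ∑ i, ∑ j, σ (ω i) (ω j) = σ (∑ i, ω i) (∑ i, ω i) := by
      simp only [map_sum, FunLike.coe_sum, Finset.sum_apply]
      exact Finset.sum_comm
    rw [hσ_sum]
    refine ⟨φ.diagonalForm_self_nonneg hlam_sum hlam_nonneg _, fun f => ?_⟩
    have hmeas : Measurable fun ω' => Slim ω' (∑ i, ω i) :=
      (continuous_eval_const _).measurable.comp hSlimMeas
    rw [← hlaw, integral_map hmeas.aemeasurable f.continuous.aestronglyMeasurable]
    exact hconv (f.compContinuous ⟨fun x => x (∑ i, ω i), continuous_eval_const _⟩)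
  · simpa only [← φ.diagonalForm_apply hlam_sum, φ.diagonalForm_apply_self hlam_sum] using hlam_sum

/-- **Theorem 2, necessity.** Let `(S_n)` be bounded linear test-statistics
on a separable real Hilbert space `H`.  Let `(λ_i)` be positive constants, `(φ_i)` an
orthonormal basis of `H`, `(Z_i)` i.i.d. standard normal random variables, and let
`S = ∑_i √λ_i Z_i ⟪φ_i, ·⟫`, whose partial sums are assumed to converge almost surely in
the dual `H⋆` (operator norm).  If `S_n → S` in distribution, then Conditions (G0), (G1)
and (G2) hold, with `σ(ω,ω') = ∑_i λ_i ⟪φ_i,ω⟫⟪φ_i,ω'⟫`. -/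
theorem conditions_necessary_of_tendsto_in_distribution
    {Ω : Type*} [MeasurableSpace Ω] (P : Measure Ω) [IsProbabilityMeasure P]
    {H : Type*} [NormedAddCommGroup H] [InnerProductSpace ℝ H]
    [CompleteSpace H] [TopologicalSpace.SeparableSpace H]
    [MeasurableSpace (H →L[ℝ] ℝ)] [BorelSpace (H →L[ℝ] ℝ)]
    (S : ℕ → Ω → (H →L[ℝ] ℝ)) (hSmeas : ∀ n, Measurable (S n))
    (lam : ℕ → ℝ) (hlam : ∀ i, 0 < lam i)
    (φ : HilbertBasis ℕ ℝ H)
    {Ω' : Type*} [MeasurableSpace Ω'] (P' : Measure Ω') [IsProbabilityMeasure P']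
    (Z : ℕ → Ω' → ℝ) (hZmeas : ∀ i, Measurable (Z i))
    (hZindep : iIndepFun Z P')
    (hZgauss : ∀ i, Measure.map (Z i) P' = gaussianReal 0 1)
    (Slim : Ω' → (H →L[ℝ] ℝ)) (hSlimMeas : Measurable Slim)
    -- the series defining `S` converges almost surely in `H⋆`:
    (hSlim : ∀ᵐ b' ∂P',
      Tendsto
        (fun m => ∑ i ∈ Finset.range m,
          (Real.sqrt (lam i) * Z i b') • (innerSL ℝ (φ i : H)))
        atTop (𝓝 (Slim b')))
    -- `S_n → S` in distribution:
    (hconv : ∀ f : BoundedContinuousFunction (H →L[ℝ] ℝ) ℝ,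
      Tendsto (fun n => ∫ a, f (S n a) ∂P) atTop (𝓝 (∫ b', f (Slim b') ∂P'))) :
    -- Condition (G0), with `σ(ω,ω') = ∑_i λ_i ⟪φ_i,ω⟫⟪φ_i,ω'⟫`:
    (∃ σ : H →L[ℝ] H →L[ℝ] ℝ,
      (∀ v w : H, σ v w = ∑' i, lam i * ⟪(φ i : H), v⟫_ℝ * ⟪(φ i : H), w⟫_ℝ) ∧
      (∀ v w : H, σ v w = σ w v) ∧
      (∀ (m : ℕ) (ω : Fin m → H),
        0 ≤ ∑ i, ∑ j, σ (ω i) (ω j) ∧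
        ∀ f : BoundedContinuousFunction ℝ ℝ,
          Tendsto (fun n => ∫ a, f (S n a (∑ i, ω i)) ∂P) atTop
            (𝓝 (∫ t, f t ∂gaussianReal 0 (∑ i, ∑ j, σ (ω i) (ω j)).toNNReal)))) ∧
    -- Condition (G1):
    (∃ b : HilbertBasis ℕ ℝ H,
      Summable fun i =>
        ∑' j, lam j * ⟪(φ j : H), (b i : H)⟫_ℝ * ⟪(φ j : H), (b i : H)⟫_ℝ) ∧
    -- Condition (G2):
    (∃ b : HilbertBasis ℕ ℝ H, ∀ ε > (0 : ℝ),
      Tendsto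
        (fun i => Filter.limsup
          (fun n => P {a | ε ≤ ∑' k : ℕ, (S n a (b (i + 1 + k))) ^ 2}) atTop)
        atTop (𝓝 (0 : ℝ≥0∞))) :=
  conditions_necessary_of_tendsto_in_distribution_general P S hSmeas lam hlam φ P' Z hZmeas hZindep
    hZgauss Slim hSlimMeas hSlim hconv
end

section
/- Let H be a separable RKHS of real-valued functions on a set X with reproducing kernel K, and let σ : H × H → ℝ be a continuous symmetric bilinear form with σ(ω,ω) ≥ 0 for all ω ∈ H, satisfying Condition (G1). Define T_σ : H → H by (T_σ f)(x) = σ(f, K_x) for all x ∈ X. Then: (1) T_σ f ∈ H for every f ∈ H; (2) ⟨T_σ f, ω⟩ = σ(f,ω) for all f, ω ∈ H; (3) T_σ is self-adjoint; (4) T_σ is trace class, with trace ∑_{i≥1} ⟨φ_i, T_σ φ_i⟩ = ∑_{i≥1} σ(φ_i,φ_i) < ∞ for every orthonormal basis (φ_i)_{i≥1} of H. -/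
/-!
A positive symmetric form `σ` is the Gram form `σ(u, v) = ⟪J u, J v⟫` of a bounded map `J` into
the Hilbert completion of `(H, σ)`. Hence `∑ σ(φᵢ, φᵢ) = ∑ ‖J φᵢ‖²` is the Hilbert–Schmidt sum
of `J`, which by Parseval and exchanging the order of summation equals `∑ ‖J† eⱼ‖²` for a Hilbert
basis `(eⱼ)` of the target; so it does not depend on the basis `(φᵢ)`, and (G1) makes it finite
for every basis. The operator `T_σ` itself is the Riesz representative of `σ`.
-/

open scoped InnerProductSpace ENNReal

namespace HilbertBasis

variable {ι E : Type*} [NormedAddCommGroup E] [InnerProductSpace ℝ E]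

theorem hasSum_real_inner_sq (b : HilbertBasis ι ℝ E) (x : E) :
    HasSum (fun i => ⟪b i, x⟫_ℝ ^ 2) (‖x‖ ^ 2) := by
  simpa only [real_inner_comm x, ← sq, real_inner_self_eq_norm_sq]
    using b.hasSum_inner_mul_inner x x

theorem tsum_ofReal_real_inner_sq (b : HilbertBasis ι ℝ E) (x : E) :
    ∑' i, ENNReal.ofReal (⟪b i, x⟫_ℝ ^ 2) = ENNReal.ofReal (‖x‖ ^ 2) := by
  rw [← (b.hasSum_real_inner_sq x).tsum_eq,
    ENNReal.ofReal_tsum_of_nonneg (fun _ => sq_nonneg _) (b.hasSum_real_inner_sq x).summable]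

end HilbertBasis

namespace ContinuousLinearMap

variable {ι κ E F : Type*} [NormedAddCommGroup E] [InnerProductSpace ℝ E] [CompleteSpace E]
  [NormedAddCommGroup F] [InnerProductSpace ℝ F] [CompleteSpace F]

theorem tsum_ofReal_norm_apply_sq_eq_adjoint (A : E →L[ℝ] F) (b : HilbertBasis ι ℝ E)
    (e : HilbertBasis κ ℝ F) :
    ∑' i, ENNReal.ofReal (‖A (b i)‖ ^ 2) = ∑' j, ENNReal.ofReal (‖adjoint A (e j)‖ ^ 2) := by
  simp_rw [← e.tsum_ofReal_real_inner_sq, ← b.tsum_ofReal_real_inner_sq]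
  rw [ENNReal.tsum_comm]
  simp_rw [adjoint_inner_right, real_inner_comm (e _)]

theorem tsum_ofReal_norm_apply_sq_congr (A : E →L[ℝ] F) (b : HilbertBasis ι ℝ E)
    (c : HilbertBasis κ ℝ E) :
    ∑' i, ENNReal.ofReal (‖A (b i)‖ ^ 2) = ∑' j, ENNReal.ofReal (‖A (c j)‖ ^ 2) := by
  obtain ⟨_, e, -⟩ := exists_hilbertBasis ℝ F
  rw [A.tsum_ofReal_norm_apply_sq_eq_adjoint b e, A.tsum_ofReal_norm_apply_sq_eq_adjoint c e]

end ContinuousLinearMap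

/-- `M` with the semi-inner product `B`, available under `[Fact B.IsPosSemidef]`. -/
def WithBilinForm {M : Type*} [AddCommGroup M] [Module ℝ M] (_B : LinearMap.BilinForm ℝ M) :
    Type _ :=
  M

namespace WithBilinForm

variable {M : Type*} [AddCommGroup M] [Module ℝ M] (B : LinearMap.BilinForm ℝ M)

instance : AddCommGroup (WithBilinForm B) := inferInstanceAs (AddCommGroup M)

instance : Module ℝ (WithBilinForm B) := inferInstanceAs (Module ℝ M)

def toWith : M →ₗ[ℝ] WithBilinForm B := LinearMap.id

variable [hB : Fact B.IsPosSemidef]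

instance : PreInnerProductSpace.Core ℝ (WithBilinForm B) where
  inner u v := B u v
  conj_inner_symm u v := hB.out.isSymm.eq v u
  re_inner_nonneg := hB.out.isNonneg.nonneg
  add_left := LinearMap.map_add₂ B
  smul_left u v r := LinearMap.map_smul₂ B r u v

noncomputable instance : SeminormedAddCommGroup (WithBilinForm B) :=
  InnerProductSpace.Core.toSeminormedAddCommGroup (𝕜 := ℝ)

noncomputable instance : InnerProductSpace ℝ (WithBilinForm B) := .ofCore _

theorem inner_toWith (u v : M) : ⟪toWith B u, toWith B v⟫_ℝ = B u v := rfl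

theorem norm_toWith (u : M) : ‖toWith B u‖ = √(B u u) := rfl

end WithBilinForm

universe u

open UniformSpace in
theorem exists_inner_map_map_eq_of_isPosSemidef {E : Type u} [NormedAddCommGroup E]
    [InnerProductSpace ℝ E] (σ : E →L[ℝ] E →L[ℝ] ℝ)
    (hσ : LinearMap.BilinForm.IsPosSemidef σ.toLinearMap₁₂) :
    ∃ (F : Type u) (_ : NormedAddCommGroup F) (_ : InnerProductSpace ℝ F) (_ : CompleteSpace F)
      (J : E →L[ℝ] F), ∀ u v, ⟪J u, J v⟫_ℝ = σ u v := by
  have : Fact (LinearMap.BilinForm.IsPosSemidef σ.toLinearMap₁₂) := ⟨hσ⟩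
  have hbound (u : E) : ‖WithBilinForm.toWith σ.toLinearMap₁₂ u‖ ≤ √‖σ‖ * ‖u‖ := by
    rw [WithBilinForm.norm_toWith, ← Real.sqrt_mul_self (norm_nonneg u),
      ← Real.sqrt_mul (norm_nonneg σ), ← mul_assoc]
    exact Real.sqrt_le_sqrt ((le_abs_self _).trans (σ.le_opNorm₂ u u))
  let J : E →L[ℝ] Completion (WithBilinForm σ.toLinearMap₁₂) :=
    Completion.toComplL.comp ((WithBilinForm.toWith σ.toLinearMap₁₂).mkContinuous _ hbound)
  exact ⟨_, inferInstance, inferInstance, inferInstance, J,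
    fun u v => (Completion.inner_coe _ _).trans (WithBilinForm.inner_toWith _ u v)⟩

section PositiveForm

variable {ι κ E : Type*} [NormedAddCommGroup E] [InnerProductSpace ℝ E] [CompleteSpace E]
  {σ : E →L[ℝ] E →L[ℝ] ℝ}

theorem tsum_ofReal_apply_hilbertBasis_congr
    (hσ : LinearMap.BilinForm.IsPosSemidef σ.toLinearMap₁₂)
    (b : HilbertBasis ι ℝ E) (c : HilbertBasis κ ℝ E) :
    ∑' i, ENNReal.ofReal (σ (b i) (b i)) = ∑' j, ENNReal.ofReal (σ (c j) (c j)) := by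
  obtain ⟨F, _, _, _, J, hJ⟩ := exists_inner_map_map_eq_of_isPosSemidef σ hσ
  simp_rw [← hJ, real_inner_self_eq_norm_sq]
  exact J.tsum_ofReal_norm_apply_sq_congr b c

theorem summable_apply_hilbertBasis_of_summable
    (hσ : LinearMap.BilinForm.IsPosSemidef σ.toLinearMap₁₂)
    (b : HilbertBasis ι ℝ E) (c : HilbertBasis κ ℝ E) (h : Summable fun i => σ (b i) (b i)) :
    Summable fun j => σ (c j) (c j) := by
  have hc : ∑' j, ENNReal.ofReal (σ (c j) (c j)) ≠ ∞ :=
    tsum_ofReal_apply_hilbertBasis_congr hσ b c ▸ h.tsum_ofReal_ne_top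
  exact (ENNReal.summable_toReal hc).congr fun j => ENNReal.toReal_ofReal (hσ.isNonneg.nonneg _)

theorem isSelfAdjoint_continuousLinearMapOfBilin (hσ : ∀ u v, σ u v = σ v u) :
    IsSelfAdjoint (InnerProductSpace.continuousLinearMapOfBilin σ) := by
  rw [ContinuousLinearMap.isSelfAdjoint_iff_isSymmetric]
  intro u v
  rw [ContinuousLinearMap.coe_coe, InnerProductSpace.continuousLinearMapOfBilin_apply, hσ,
    real_inner_comm, InnerProductSpace.continuousLinearMapOfBilin_apply]

end PositiveForm

theorem exists_traceClass_operator_of_bilinear_form_general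
    {X : Type*} {H : Type*} [NormedAddCommGroup H] [InnerProductSpace ℝ H]
    [CompleteSpace H]
    (k : X → H)
    (σ : H →L[ℝ] H →L[ℝ] ℝ)
    (hσsymm : ∀ v w : H, σ v w = σ w v)
    (hσpos : ∀ v : H, 0 ≤ σ v v)
    (b₀ : HilbertBasis ℕ ℝ H)
    (hG1 : Summable fun i => σ (b₀ i) (b₀ i)) :
    ∃ T : H →L[ℝ] H,
      -- (1) `T_σ f ∈ H`, with function values `(T_σ f)(x) = σ(f, K_x)`:
      (∀ f : H, ∀ x : X, ⟪k x, T f⟫_ℝ = σ f (k x)) ∧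
      -- (2) `⟪T_σ f, ω⟫ = σ(f, ω)`:
      (∀ f ω : H, ⟪T f, ω⟫_ℝ = σ f ω) ∧
      -- (3) `T_σ` is self-adjoint:
      IsSelfAdjoint T ∧
      -- (4) `T_σ` is trace class, with finite trace `∑ ⟪φ_i, T φ_i⟫ = ∑ σ(φ_i, φ_i)`
      --     for every orthonormal basis:
      (∀ b : HilbertBasis ℕ ℝ H,
        (Summable fun i => ⟪b i, T (b i)⟫_ℝ) ∧
        (Summable fun i => σ (b i) (b i)) ∧
        ∑' i, ⟪b i, T (b i)⟫_ℝ = ∑' i, σ (b i) (b i)) := by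
  let T := InnerProductSpace.continuousLinearMapOfBilin σ
  have hT : ∀ f ω, ⟪T f, ω⟫_ℝ = σ f ω := InnerProductSpace.continuousLinearMapOfBilin_apply σ
  have hT' (f ω : H) : ⟪ω, T f⟫_ℝ = σ f ω := by rw [real_inner_comm, hT]
  have hσ : LinearMap.BilinForm.IsPosSemidef σ.toLinearMap₁₂ := ⟨⟨hσsymm⟩, ⟨hσpos⟩⟩
  refine ⟨T, fun f x => hT' f (k x), hT, isSelfAdjoint_continuousLinearMapOfBilin hσsymm,
    fun b => ?_⟩
  have hb := summable_apply_hilbertBasis_of_summable hσ b₀ b hG1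
  exact ⟨hb.congr fun i => (hT' _ _).symm, hb, tsum_congr fun i => hT' _ _⟩

/-- Let `H` be a separable RKHS on a set `X` (encoded by its feature map
`k : X → H`, so `K_x = k x` and elements `ω` of `H` are the functions `x ↦ ⟪k x, ω⟫`), and
let `σ` be a continuous symmetric bilinear form on `H` with `σ(ω,ω) ≥ 0`, satisfying
Condition (G1) (for some orthonormal basis `(φ_i)`, `∑ σ(φ_i,φ_i) < ∞`).  Then the operator
`T_σ` defined by `(T_σ f)(x) = σ(f, K_x)` maps `H` into `H`, satisfies
`⟪T_σ f, ω⟫ = σ(f, ω)` for all `f, ω`, is self-adjoint, and is trace class: for every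
orthonormal basis `(φ_i)` the trace `∑ ⟪φ_i, T_σ φ_i⟫ = ∑ σ(φ_i,φ_i)` is finite. -/
theorem exists_traceClass_operator_of_bilinear_form
    {X : Type*} {H : Type*} [NormedAddCommGroup H] [InnerProductSpace ℝ H]
    [CompleteSpace H] [TopologicalSpace.SeparableSpace H]
    (k : X → H)
    (hdense : (Submodule.span ℝ (Set.range k)).topologicalClosure = ⊤)
    (σ : H →L[ℝ] H →L[ℝ] ℝ)
    (hσsymm : ∀ v w : H, σ v w = σ w v)
    (hσpos : ∀ v : H, 0 ≤ σ v v)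
    (b₀ : HilbertBasis ℕ ℝ H)
    (hG1 : Summable fun i => σ (b₀ i) (b₀ i)) :
    ∃ T : H →L[ℝ] H,
      -- (1) `T_σ f ∈ H`, with function values `(T_σ f)(x) = σ(f, K_x)`:
      (∀ f : H, ∀ x : X, ⟪k x, T f⟫_ℝ = σ f (k x)) ∧
      -- (2) `⟪T_σ f, ω⟫ = σ(f, ω)`:
      (∀ f ω : H, ⟪T f, ω⟫_ℝ = σ f ω) ∧
      -- (3) `T_σ` is self-adjoint:
      IsSelfAdjoint T ∧
      -- (4) `T_σ` is trace class, with finite trace `∑ ⟪φ_i, T φ_i⟫ = ∑ σ(φ_i, φ_i)`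
      --     for every orthonormal basis:
      (∀ b : HilbertBasis ℕ ℝ H,
        (Summable fun i => ⟪b i, T (b i)⟫_ℝ) ∧
        (Summable fun i => σ (b i) (b i)) ∧
        ∑' i, ⟪b i, T (b i)⟫_ℝ = ∑' i, σ (b i) (b i)) :=
  exists_traceClass_operator_of_bilinear_form_general k σ hσsymm hσpos b₀ hG1
end

section
/- Assume the two-sample MMD setting with Condition 1 (F_0 and F_1 arbitrary). Define c(ω) = ∫ ω dF_0 − ∫ ω dF_1 and c* = sup_{ω∈H, ‖ω‖=1} c(ω). Then c* < ∞ and (1/n) Ψ_n = (1/n) sup_{ω∈H, ‖ω‖=1} S_n(ω)² converges almost surely to (c*)² as n → ∞. -/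
open MeasureTheory ProbabilityTheory Filter Topology
open scoped ENNReal NNReal InnerProductSpace

/-! The kernel embedding `k` is bounded, so the mean embeddings `μⱼ = ∫ k dFⱼ` exist in `H`
and `c ω = ⟪μ₀ - μ₁, ω⟫`; hence `c* = ‖μ₀ - μ₁‖`. In the same way `Sₙ ω = √n ⟪vₙ, ω⟫`, where
`vₙ` is the difference of the two empirical mean embeddings, so `Ψₙ / n = ‖vₙ‖²`. As both group
sizes tend to infinity, the strong law of large numbers in `H` gives `vₙ → μ₀ - μ₁` almost
surely. -/

section UnitSphere

variable {H : Type*} [NormedAddCommGroup H]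

theorem isEmpty_unitSphere_of_subsingleton [Subsingleton H] : IsEmpty {ω : H // ‖ω‖ = 1} :=
  ⟨fun ω => by simpa [Subsingleton.elim ω.1 0] using ω.2⟩

variable [InnerProductSpace ℝ H]

theorem exists_norm_eq_one_inner_eq_norm [Nontrivial H] (v : H) :
    ∃ ω : H, ‖ω‖ = 1 ∧ ⟪v, ω⟫_ℝ = ‖v‖ := by
  by_cases hv : v = 0
  · obtain ⟨e, he⟩ := exists_norm_eq H zero_le_one
    exact ⟨e, he, by simp [hv]⟩
  · have hvn : ‖v‖ ≠ 0 := norm_ne_zero_iff.2 hv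
    refine ⟨‖v‖⁻¹ • v, by rw [norm_smul, norm_inv, norm_norm, inv_mul_cancel₀ hvn], ?_⟩
    rw [real_inner_smul_right, real_inner_self_eq_norm_sq, sq, inv_mul_cancel_left₀ hvn]

theorem bddAbove_range_unitSphere_inner (v : H) :
    BddAbove (Set.range fun ω : {ω : H // ‖ω‖ = 1} => ⟪v, ω.1⟫_ℝ) :=
  ⟨‖v‖, by rintro _ ⟨ω, rfl⟩; simpa [ω.2] using real_inner_le_norm v ω.1⟩

theorem iSup_unitSphere_inner (v : H) : ⨆ ω : {ω : H // ‖ω‖ = 1}, ⟪v, ω.1⟫_ℝ = ‖v‖ := by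
  rcases subsingleton_or_nontrivial H with hH | hH
  · have := isEmpty_unitSphere_of_subsingleton (H := H)
    simp [Subsingleton.elim v 0]
  · obtain ⟨e, he, hve⟩ := exists_norm_eq_one_inner_eq_norm v
    have : Nonempty {ω : H // ‖ω‖ = 1} := ⟨⟨e, he⟩⟩
    refine le_antisymm (ciSup_le fun ω => ?_) ?_
    · simpa [ω.2] using real_inner_le_norm v ω.1
    · exact le_ciSup_of_le (bddAbove_range_unitSphere_inner v) ⟨e, he⟩ hve.ge

theorem iSup_unitSphere_sq_inner (v : H) :
    ⨆ ω : {ω : H // ‖ω‖ = 1}, ⟪v, ω.1⟫_ℝ ^ 2 = ‖v‖ ^ 2 := by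
  rcases subsingleton_or_nontrivial H with hH | hH
  · have := isEmpty_unitSphere_of_subsingleton (H := H)
    simp [Subsingleton.elim v 0]
  · obtain ⟨e, he, hve⟩ := exists_norm_eq_one_inner_eq_norm v
    have : Nonempty {ω : H // ‖ω‖ = 1} := ⟨⟨e, he⟩⟩
    have hle : ∀ ω : {ω : H // ‖ω‖ = 1}, ⟪v, ω.1⟫_ℝ ^ 2 ≤ ‖v‖ ^ 2 := fun ω => by
      rw [← sq_abs]
      gcongr
      simpa [ω.2] using abs_real_inner_le_norm v ω.1
    refine le_antisymm (ciSup_le hle) ?_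
    exact le_ciSup_of_le ⟨_, Set.forall_mem_range.2 hle⟩ ⟨e, he⟩ (by rw [hve])

theorem iSup_unitSphere_sq_sqrt_mul_inner {t : ℝ} (ht : 0 ≤ t) (v : H) :
    ⨆ ω : {ω : H // ‖ω‖ = 1}, (√t * ⟪v, ω.1⟫_ℝ) ^ 2 = t * ‖v‖ ^ 2 := by
  simp_rw [mul_pow, Real.sq_sqrt ht]
  rw [← Real.mul_iSup_of_nonneg ht, iSup_unitSphere_sq_inner]

end UnitSphere

section Pettis

variable {α H : Type*} [MeasurableSpace α] [NormedAddCommGroup H] [InnerProductSpace ℝ H]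
  [TopologicalSpace.SeparableSpace H] [MeasurableSpace H] [BorelSpace H] {f : α → H}

theorem Submodule.measurable_starProjection_comp (U : Submodule ℝ H) [FiniteDimensional ℝ U]
    (hf : ∀ ω : H, Measurable fun x => ⟪f x, ω⟫_ℝ) :
    Measurable fun x => U.starProjection (f x) := by
  let b := stdOrthonormalBasis ℝ U
  have hsum : (fun x => U.starProjection (f x)) =
      fun x => ∑ i, ⟪(b i : H), f x⟫_ℝ • (b i : H) := by
    ext x
    simp [b.starProjection_eq_sum_rankOne, InnerProductSpace.rankOne_apply]
  rw [hsum]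
  refine Finset.measurable_sum _ fun i _ => Measurable.smul_const ?_ _
  simpa only [real_inner_comm] using hf (b i)

/-- Pettis: `f` is the pointwise limit of its projections onto the spans of initial segments of a
dense sequence. -/
theorem measurable_of_measurable_inner (hf : ∀ ω : H, Measurable fun x => ⟪f x, ω⟫_ℝ) :
    Measurable f := by
  have : Nonempty H := ⟨0⟩
  let u := TopologicalSpace.denseSeq H
  let U : ℕ → Submodule ℝ H := fun m => Submodule.span ℝ (u '' Set.Iic m)
  have hUfin : ∀ m, FiniteDimensional ℝ (U m) := fun m =>
    FiniteDimensional.span_of_finite ℝ ((Set.finite_Iic m).image u)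
  have hUmono : Monotone U := fun _ _ h =>
    Submodule.span_mono (Set.image_mono (Set.Iic_subset_Iic.2 h))
  have hUdense : ⊤ ≤ (⨆ m, U m).topologicalClosure := by
    intro x _
    rw [← SetLike.mem_coe, Submodule.topologicalClosure_coe]
    refine closure_mono ?_
      ((TopologicalSpace.denseRange_denseSeq H).closure_range ▸ Set.mem_univ x)
    rintro _ ⟨m, rfl⟩
    exact Submodule.mem_iSup_of_mem m (Submodule.subset_span ⟨m, Set.self_mem_Iic, rfl⟩)
  exact measurable_of_tendsto_metrizable (fun m => (U m).measurable_starProjection_comp hf)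
    (tendsto_pi_nhds.2 fun x => Submodule.starProjection_tendsto_self U hUmono (f x) hUdense)

end Pettis

section MeanEmbedding

variable {𝓧 H : Type*} [NormedAddCommGroup H] [InnerProductSpace ℝ H]

noncomputable def empiricalMean (k : 𝓧 → H) (Z : ℕ → 𝓧) (m : ℕ) : H :=
  (m : ℝ)⁻¹ • ∑ i ∈ Finset.range m, k (Z i)

theorem inner_empiricalMean (k : 𝓧 → H) (Z : ℕ → 𝓧) (m : ℕ) (ω : H) :
    ⟪empiricalMean k Z m, ω⟫_ℝ = (m : ℝ)⁻¹ * ∑ i ∈ Finset.range m, ⟪k (Z i), ω⟫_ℝ := by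
  rw [empiricalMean, real_inner_smul_left, sum_inner]

theorem norm_le_sqrt_of_abs_inner_self_le {v : H} {C : ℝ} (h : |⟪v, v⟫_ℝ| ≤ C) : ‖v‖ ≤ √C :=
  Real.le_sqrt_of_sq_le <| by
    rw [← real_inner_self_eq_norm_sq]; exact (le_abs_self _).trans h

theorem integral_inner_left [MeasurableSpace 𝓧] [CompleteSpace H] {F : Measure 𝓧} {k : 𝓧 → H}
    (hk : Integrable k F) (ω : H) : ∫ x, ⟪k x, ω⟫_ℝ ∂F = ⟪∫ x, k x ∂F, ω⟫_ℝ := by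
  simp_rw [real_inner_comm ω]
  exact integral_inner hk ω

variable [MeasurableSpace 𝓧] [CompleteSpace H] [TopologicalSpace.SeparableSpace H]
  [MeasurableSpace H] [BorelSpace H]

theorem ae_tendsto_empiricalMean {Ω : Type*} [MeasurableSpace Ω] {P : Measure Ω} {k : 𝓧 → H}
    (hk : Measurable k) {F : Measure 𝓧} (hkF : Integrable k F) {Z : ℕ → Ω → 𝓧}
    (hZmeas : ∀ i, Measurable (Z i))
    (hindep : Pairwise fun i j => IndepFun (Z i) (Z j) P) (hZ : ∀ i, P.map (Z i) = F) :
    ∀ᵐ a ∂P, Tendsto (empiricalMean k fun i => Z i a) atTop (𝓝 (∫ x, k x ∂F)) := by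
  have hident : ∀ i, IdentDistrib (fun a => k (Z i a)) (fun a => k (Z 0 a)) P P := fun i =>
    IdentDistrib.comp ⟨(hZmeas i).aemeasurable, (hZmeas 0).aemeasurable, by rw [hZ, hZ]⟩ hk
  have hint : Integrable (fun a => k (Z 0 a)) P := by
    rw [← hZ 0] at hkF
    exact (integrable_map_measure hkF.aestronglyMeasurable (hZmeas 0).aemeasurable).1 hkF
  have hmean : ∫ a, k (Z 0 a) ∂P = ∫ x, k x ∂F := by
    rw [← hZ 0, integral_map (hZmeas 0).aemeasurable hk.aestronglyMeasurable]
  filter_upwards [strong_law_ae (fun i a => k (Z i a)) hint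
    (fun i j hij => (hindep hij).comp hk hk) hident] with a ha
  rw [← hmean]
  exact ha

end MeanEmbedding

theorem tendsto_atTop_of_tendsto_div_pos {m : ℕ → ℕ} {ρ : ℝ} (hρ : 0 < ρ)
    (h : Tendsto (fun n => (m n : ℝ) / n) atTop (𝓝 ρ)) : Tendsto m atTop atTop := by
  rw [← tendsto_natCast_atTop_iff (R := ℝ)]
  refine (h.pos_mul_atTop hρ tendsto_natCast_atTop_atTop).congr' ?_
  filter_upwards [eventually_ne_atTop 0] with n hn
  field_simp

theorem mmd_psi_div_n_tendsto_cstar_sq_ae_general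
    {𝓧 : Type*} [MeasurableSpace 𝓧]
    {H : Type*} [NormedAddCommGroup H] [InnerProductSpace ℝ H]
    [CompleteSpace H] [TopologicalSpace.SeparableSpace H]
    (k : 𝓧 → H) (hkmeas : ∀ ω : H, Measurable fun x => ⟪k x, ω⟫_ℝ)
    (C : ℝ) (hK : ∀ x y, |⟪k x, k y⟫_ℝ| ≤ C)
    {Ω : Type*} [MeasurableSpace Ω] (P : Measure Ω)
    (F0 F1 : Measure 𝓧) [IsProbabilityMeasure F0] [IsProbabilityMeasure F1]
    (X Y : ℕ → Ω → 𝓧)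
    (hXmeas : ∀ i, Measurable (X i)) (hYmeas : ∀ i, Measurable (Y i))
    (hindep : iIndepFun (Sum.elim X Y) P)
    (hX : ∀ i, Measure.map (X i) P = F0) (hY : ∀ i, Measure.map (Y i) P = F1)
    (n₀ n₁ : ℕ → ℕ)
    (ρ0 ρ1 : ℝ) (hρ0 : ρ0 ∈ Set.Ioo (0 : ℝ) 1) (hρ1 : ρ1 ∈ Set.Ioo (0 : ℝ) 1)
    (hrat0 : Tendsto (fun n => (n₀ n : ℝ) / n) atTop (𝓝 ρ0))
    (hrat1 : Tendsto (fun n => (n₁ n : ℝ) / n) atTop (𝓝 ρ1))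
    -- the linear test-statistic `Sₙ(ω)`:
    (S : ℕ → Ω → H → ℝ)
    (hS : ∀ n a ω, S n a ω = Real.sqrt n *
      ((n₀ n : ℝ)⁻¹ * ∑ i ∈ Finset.range (n₀ n), ⟪k (X i a), ω⟫_ℝ
        - (n₁ n : ℝ)⁻¹ * ∑ j ∈ Finset.range (n₁ n), ⟪k (Y j a), ω⟫_ℝ))
    -- `c(ω) = ∫ ω dF₀ − ∫ ω dF₁`:
    (c : H → ℝ)
    (hc : ∀ ω, c ω = (∫ x, ⟪k x, ω⟫_ℝ ∂F0) - ∫ x, ⟪k x, ω⟫_ℝ ∂F1) :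
    -- `c* < ∞`:
    BddAbove (Set.range fun ω : {ω : H // ‖ω‖ = 1} => c ω.1) ∧
    -- `(1/n) Ψₙ → (c*)²` almost surely:
    (∀ᵐ a ∂P,
      Tendsto
        (fun n : ℕ => (n : ℝ)⁻¹ * ⨆ ω : {ω : H // ‖ω‖ = 1}, (S n a ω.1) ^ 2)
        atTop (𝓝 ((⨆ ω : {ω : H // ‖ω‖ = 1}, c ω.1) ^ 2))) := by
  borelize H
  have hk : Measurable k := measurable_of_measurable_inner hkmeas
  have hkC : ∀ x, ‖k x‖ ≤ √C := fun x => norm_le_sqrt_of_abs_inner_self_le (hK x x)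
  have hint0 : Integrable k F0 := .of_bound hk.aestronglyMeasurable _ (ae_of_all _ hkC)
  have hint1 : Integrable k F1 := .of_bound hk.aestronglyMeasurable _ (ae_of_all _ hkC)
  have hc_inner : ∀ ω, c ω = ⟪(∫ x, k x ∂F0) - ∫ x, k x ∂F1, ω⟫_ℝ := fun ω => by
    rw [hc, inner_sub_left, integral_inner_left hint0, integral_inner_left hint1]
  have hS_inner : ∀ n a ω, S n a ω = √n *
      ⟪empiricalMean k (X · a) (n₀ n) - empiricalMean k (Y · a) (n₁ n), ω⟫_ℝ := fun n a ω => by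
    rw [hS, inner_sub_left, inner_empiricalMean, inner_empiricalMean]
  simp_rw [hc_inner]
  refine ⟨bddAbove_range_unitSphere_inner _, ?_⟩
  filter_upwards [ae_tendsto_empiricalMean hk hint0 hXmeas
      (fun i j hij => hindep.indepFun (Sum.inl_injective.ne hij)) hX,
    ae_tendsto_empiricalMean hk hint1 hYmeas
      (fun i j hij => hindep.indepFun (Sum.inr_injective.ne hij)) hY] with a hXa hYa
  have hv := (hXa.comp (tendsto_atTop_of_tendsto_div_pos hρ0.1 hrat0)).sub
    (hYa.comp (tendsto_atTop_of_tendsto_div_pos hρ1.1 hrat1))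
  rw [iSup_unitSphere_inner]
  refine (hv.norm.pow 2).congr' ?_
  filter_upwards [eventually_ne_atTop 0] with n hn0
  simp only [hS_inner, iSup_unitSphere_sq_sqrt_mul_inner (Nat.cast_nonneg n), Function.comp_apply]
  field_simp

/-- **MMD under the alternative.** In the two-sample MMD setting with bounded
kernel and non-vanishing groups (`F₀`, `F₁` arbitrary), let
`c(ω) = ∫ ω dF₀ − ∫ ω dF₁` and `c* = sup_{‖ω‖=1} c(ω)`.  Then `c* < ∞` (the set of values
is bounded above) and `(1/n) Ψₙ = (1/n) sup_{‖ω‖=1} Sₙ(ω)²` converges almost surely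
to `(c*)²`. -/
theorem mmd_psi_div_n_tendsto_cstar_sq_ae
    {𝓧 : Type*} [MeasurableSpace 𝓧]
    {H : Type*} [NormedAddCommGroup H] [InnerProductSpace ℝ H]
    [CompleteSpace H] [TopologicalSpace.SeparableSpace H]
    (k : 𝓧 → H) (hkmeas : ∀ ω : H, Measurable fun x => ⟪k x, ω⟫_ℝ)
    (C : ℝ) (hC : 0 < C) (hK : ∀ x y, |⟪k x, k y⟫_ℝ| ≤ C)
    {Ω : Type*} [MeasurableSpace Ω] (P : Measure Ω) [IsProbabilityMeasure P]
    (F0 F1 : Measure 𝓧) [IsProbabilityMeasure F0] [IsProbabilityMeasure F1]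
    (X Y : ℕ → Ω → 𝓧)
    (hXmeas : ∀ i, Measurable (X i)) (hYmeas : ∀ i, Measurable (Y i))
    (hindep : iIndepFun (Sum.elim X Y) P)
    (hX : ∀ i, Measure.map (X i) P = F0) (hY : ∀ i, Measure.map (Y i) P = F1)
    (n₀ n₁ : ℕ → ℕ) (hn : ∀ n, n₀ n + n₁ n = n)
    (ρ0 ρ1 : ℝ) (hρ0 : ρ0 ∈ Set.Ioo (0 : ℝ) 1) (hρ1 : ρ1 ∈ Set.Ioo (0 : ℝ) 1)
    (hrat0 : Tendsto (fun n => (n₀ n : ℝ) / n) atTop (𝓝 ρ0))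
    (hrat1 : Tendsto (fun n => (n₁ n : ℝ) / n) atTop (𝓝 ρ1))
    -- the linear test-statistic `Sₙ(ω)`:
    (S : ℕ → Ω → H → ℝ)
    (hS : ∀ n a ω, S n a ω = Real.sqrt n *
      ((n₀ n : ℝ)⁻¹ * ∑ i ∈ Finset.range (n₀ n), ⟪k (X i a), ω⟫_ℝ
        - (n₁ n : ℝ)⁻¹ * ∑ j ∈ Finset.range (n₁ n), ⟪k (Y j a), ω⟫_ℝ))
    -- `c(ω) = ∫ ω dF₀ − ∫ ω dF₁`:
    (c : H → ℝ)
    (hc : ∀ ω, c ω = (∫ x, ⟪k x, ω⟫_ℝ ∂F0) - ∫ x, ⟪k x, ω⟫_ℝ ∂F1) :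
    -- `c* < ∞`:
    BddAbove (Set.range fun ω : {ω : H // ‖ω‖ = 1} => c ω.1) ∧
    -- `(1/n) Ψₙ → (c*)²` almost surely:
    (∀ᵐ a ∂P,
      Tendsto
        (fun n : ℕ => (n : ℝ)⁻¹ * ⨆ ω : {ω : H // ‖ω‖ = 1}, (S n a ω.1) ^ 2)
        atTop (𝓝 ((⨆ ω : {ω : H // ‖ω‖ = 1}, c ω.1) ^ 2))) :=
  mmd_psi_div_n_tendsto_cstar_sq_ae_general k hkmeas C hK P F0 F1 X Y hXmeas hYmeas hindep hX hY n₀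
    n₁ ρ0 ρ1 hρ0 hρ1 hrat0 hrat1 S hS c hc
end
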